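/- arXiv:1410.5334 — 4 statements merged into one kernel-verified Lean document; each statement's English description precedes it below -/
import Mathlib

section
/- Let π be a probability measure on ℝ × ℝ such that the map (x,y) ↦ x is π-integrable, π(Mᶜ) = 0, and for every s ≥ 0 one has ∫_{{(x,y) : y ≥ s}} x dπ(x,y) ≥ s · π({(x,y) : y ≥ s}). Then the conditional tail mean is nondecreasing: for all real numbers 0 ≤ s₁ ≤ s₂ with π({(x,y) : y ≥ s₂}) > 0, one has (∫_{{y ≥ s₁}} x dπ) / π({(x,y) : y ≥ s₁}) ≤ (∫_{{y ≥ s₂}} x dπ) / π({(x,y) : y ≥ s₂}). -/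
open MeasureTheory Set

noncomputable section

/-- The set `M = {(x,y) : y ≥ 0 and y ≥ x}`. -/
def MSet : Set (ℝ × ℝ) := {p : ℝ × ℝ | 0 ≤ p.2 ∧ p.1 ≤ p.2}

/-- A probability measure on `ℝ` is centred if the identity is integrable with mean `0`. -/
def Centred (μ : Measure ℝ) : Prop :=
  Integrable (fun x : ℝ => x) μ ∧ (∫ x, x ∂μ) = 0

/-- Strict supermodularity of a bivariate function. -/
def StrictlySupermodular (F : ℝ × ℝ → ℝ) : Prop :=
  ∀ w₁ w₂ s₁ s₂ : ℝ, w₁ < w₂ → s₁ < s₂ →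
    F (w₁, s₂) + F (w₂, s₁) < F (w₁, s₁) + F (w₂, s₂)

/-- `F` is serrated with ridge `a : ℝ → EReal`: for every `w`, `s ↦ F (w, s)` is
strictly increasing on `{s | s < a w}` and strictly decreasing on `{s | a w < s}`. -/
def SerratedWithRidge (F : ℝ × ℝ → ℝ) (a : ℝ → EReal) : Prop :=
  ∀ w : ℝ,
    StrictMonoOn (fun s : ℝ => F (w, s)) {s : ℝ | (s : EReal) < a w} ∧
    StrictAntiOn (fun s : ℝ => F (w, s)) {s : ℝ | a w < (s : EReal)}

/-- Rogers' conditions for `π` to be the joint law of the terminal value and the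
running maximum of a UI martingale started at `0` with terminal law `μ`. -/
def RogersAdmissible (μ : Measure ℝ) (π : Measure (ℝ × ℝ)) : Prop :=
  Integrable (fun p : ℝ × ℝ => p.1) π ∧
  (∫ p : ℝ × ℝ, p.1 ∂π) = 0 ∧
  π MSetᶜ = 0 ∧
  (∀ s : ℝ, 0 ≤ s →
    s * (π {p : ℝ × ℝ | s ≤ p.2}).toReal ≤ ∫ p in {p : ℝ × ℝ | s ≤ p.2}, p.1 ∂π) ∧
  Measure.map Prod.fst π = μ

/-- The barycenter function of `μ`. -/
def barycenter (μ : Measure ℝ) (w : ℝ) : ℝ :=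
  if 0 < (μ (Ici w)).toReal then (∫ x in Ici w, x ∂μ) / (μ (Ici w)).toReal else w

/-- `g(w) = min(β_μ(w), max(a(w), 0, w))`, the max computed in `EReal`. -/
def ridgeG (μ : Measure ℝ) (a : ℝ → EReal) (w : ℝ) : ℝ :=
  (min ((barycenter μ w : ℝ) : EReal) (max (a w) (max (0 : EReal) ((w : ℝ) : EReal)))).toReal

/-!
Write `I(s) = ∫_{y ≥ s} x dπ` and `m(s) = π{y ≥ s}`. Passing from `s₂` down to `s₁` adds the
strip `{s₁ ≤ y < s₂}`, on which `x ≤ y < s₂` because `π` lives on `M`; so the added mass has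
values at most `s₂`, while by hypothesis the tail mean `I(s₂) / m(s₂)` is already at least `s₂`.
Mixing in values below the current average cannot raise it.
-/

theorem div_le_div_of_sub_le_mul_sub {a₁ a₂ b₁ b₂ c : ℝ} (hb₂ : 0 < b₂) (hb : b₂ ≤ b₁)
    (hc : c * b₂ ≤ a₂) (ha : a₁ - a₂ ≤ c * (b₁ - b₂)) :
    a₁ / b₁ ≤ a₂ / b₂ := by
  rw [div_le_div_iff₀ (hb₂.trans_le hb) hb₂]
  nlinarith [mul_le_mul_of_nonneg_right ha hb₂.le,
    mul_le_mul_of_nonneg_right hc (sub_nonneg.mpr hb)]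

theorem setIntegral_sub_setIntegral_le_mul {α : Type*} [MeasurableSpace α] {μ : Measure α}
    {f : α → ℝ} {s t : Set α} {c : ℝ} (hs : MeasurableSet s) (ht : MeasurableSet t)
    (hts : t ⊆ s) (hμs : μ s ≠ ⊤) (hf : IntegrableOn f s μ)
    (hfc : ∀ᵐ x ∂μ, x ∈ s \ t → f x ≤ c) :
    ∫ x in s, f x ∂μ - ∫ x in t, f x ∂μ ≤ c * (μ.real s - μ.real t) := by
  have hμst : μ (s \ t) ≠ ⊤ := measure_ne_top_of_subset sdiff_subset hμs
  calc ∫ x in s, f x ∂μ - ∫ x in t, f x ∂μ = ∫ x in s \ t, f x ∂μ :=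
        (setIntegral_sdiff ht hf hts).symm
    _ ≤ ∫ _ in s \ t, c ∂μ :=
        setIntegral_mono_on_ae (hf.mono_set sdiff_subset) (integrableOn_const hμst)
          (hs.diff ht) hfc
    _ = c * (μ.real s - μ.real t) := by
        rw [setIntegral_const, measureReal_sdiff hts ht hμs, smul_eq_mul, mul_comm]

theorem ae_fst_le_of_snd_lt {π : Measure (ℝ × ℝ)} (h_supp : π MSetᶜ = 0) (s : ℝ) :
    ∀ᵐ p ∂π, p.2 < s → p.1 ≤ s := by
  filter_upwards [measure_eq_zero_iff_ae_notMem.mp h_supp] with p hp hps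
  exact (not_not.mp hp).2.trans hps.le

/-- monotonicity of the conditional tail mean. -/
theorem tail_mean_nondecreasing (π : Measure (ℝ × ℝ)) [IsProbabilityMeasure π]
    (h_int : Integrable (fun p : ℝ × ℝ => p.1) π)
    (h_supp : π MSetᶜ = 0)
    (h_tail : ∀ s : ℝ, 0 ≤ s →
      s * (π {p : ℝ × ℝ | s ≤ p.2}).toReal ≤ ∫ p in {p : ℝ × ℝ | s ≤ p.2}, p.1 ∂π)
    (s₁ s₂ : ℝ) (hs₁ : 0 ≤ s₁) (hs : s₁ ≤ s₂)
    (hpos : 0 < (π {p : ℝ × ℝ | s₂ ≤ p.2}).toReal) :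
    (∫ p in {p : ℝ × ℝ | s₁ ≤ p.2}, p.1 ∂π) / (π {p : ℝ × ℝ | s₁ ≤ p.2}).toReal ≤
      (∫ p in {p : ℝ × ℝ | s₂ ≤ p.2}, p.1 ∂π) / (π {p : ℝ × ℝ | s₂ ≤ p.2}).toReal := by
  have h_meas (s : ℝ) : MeasurableSet {p : ℝ × ℝ | s ≤ p.2} :=
    measurableSet_le measurable_const measurable_snd
  have h_sub : {p : ℝ × ℝ | s₂ ≤ p.2} ⊆ {p | s₁ ≤ p.2} := fun p hp => hs.trans hp
  simp only [← measureReal_def] at h_tail hpos ⊢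
  refine div_le_div_of_sub_le_mul_sub hpos (measureReal_mono h_sub)
    (h_tail s₂ (hs₁.trans hs)) ?_
  refine setIntegral_sub_setIntegral_le_mul (h_meas s₁) (h_meas s₂) h_sub (measure_ne_top _ _)
    h_int.integrableOn ?_
  filter_upwards [ae_fst_le_of_snd_lt h_supp s₂] with p hp hmem
  exact hp (not_le.mp hmem.2)
end
end

section
/- If F : ℝ × ℝ → ℝ is strictly supermodular and serrated with ridge a : ℝ → ℝ ∪ {−∞,+∞}, then the ridge is nondecreasing: for all w₁ < w₂ one has a(w₁) ≤ a(w₂) (in the order of ℝ ∪ {−∞,+∞}). -/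
open MeasureTheory Set

noncomputable section

/-- a strictly supermodular serrated function has a nondecreasing ridge. -/
theorem ridge_nondecreasing (F : ℝ × ℝ → ℝ) (a : ℝ → EReal)
    (hF : StrictlySupermodular F) (hser : SerratedWithRidge F a) :
    ∀ w₁ w₂ : ℝ, w₁ < w₂ → a w₁ ≤ a w₂ := by
  intro w₁ w₂ hw
  by_contra hlt
  push_neg at hlt
  obtain ⟨s₁, hs₁l, hs₁r⟩ := EReal.exists_between_coe_real hlt
  obtain ⟨s₂, hs₂l, hs₂r⟩ := EReal.exists_between_coe_real hs₁r
  have hs : s₁ < s₂ := by exact_mod_cast hs₂l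
  have h1 : F (w₁, s₁) < F (w₁, s₂) :=
    (hser w₁).1 (by exact_mod_cast lt_trans hs₂l hs₂r) (by exact_mod_cast hs₂r) hs
  have h2 : F (w₂, s₂) < F (w₂, s₁) :=
    (hser w₂).2 (by exact_mod_cast hs₁l) (by exact_mod_cast lt_trans hs₁l hs₂l) hs
  have := hF w₁ w₂ s₁ s₂ hw hs
  linarith
end
end

section
/- Let μ be a centred probability measure on ℝ with no atoms and let F : ℝ × ℝ → ℝ be continuous and strictly supermodular such that for every w the function s ↦ F(w,s) is strictly increasing on all of ℝ. Assume the function w ↦ F(w, β_μ(w)) is μ-integrable. Then for every Rogers-admissible probability measure π with marginal μ such that F is π-integrable, one has ∫ F dπ ≤ ∫ F(w, β_μ(w)) dμ(w); i.e. the Azéma–Yor joint law, the pushforward of μ under w ↦ (w, β_μ(w)), maximizes ∫ F dπ among Rogers-admissible measures with marginal μ. -/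
/-!
The barycenter `β = β_μ` is nondecreasing with `w ≤ β w` and `β ≥ 0`. Chains of increments
`F (w, c) - F (w, b)` with `β w ≤ b ≤ c` define a nondecreasing right-continuous potential `Λ`,
a derivative-free version of `s ↦ ∫₀ˢ ∂₂F (β⁻¹ r, r) dr`, and supermodularity gives
`F (w, s) - F (w, β w) ≤ Λ s - Λ (β w)` for `s ≥ 0`. Testing Rogers' condition against
`(x - c)⁺` yields the Hardy–Littlewood bound `π (S ≥ t) ≤ μ (β ≥ t)`: under `π` the maximum `S`
is stochastically dominated by `β W`. Integrating `dΛ` against this dominance (Fubini) gives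
`∫ (Λ S - Λ (β W)) dπ ≤ 0`, hence `∫ F dπ ≤ ∫ F (W, β W) dπ = ∫ F (w, β w) dμ`.
-/

open MeasureTheory Set

noncomputable section

open Filter Topology

section Barycenter

variable {μ : Measure ℝ}

lemma barycenter_le_of_setIntegral_Ici_le {w c : ℝ} (hwc : w ≤ c)
    (h : ∫ x in Ici w, x ∂μ ≤ c * μ.real (Ici w)) : barycenter μ w ≤ c := by
  rw [barycenter, ← measureReal_def]
  split_ifs with hpos
  · exact (div_le_iff₀ hpos).2 h
  · exact hwc

lemma setIntegral_id_le_mul [IsFiniteMeasure μ] (hμ : Integrable (fun x : ℝ => x) μ)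
    {s : Set ℝ} (hs : MeasurableSet s) {c : ℝ} (hc : ∀ x ∈ s, x ≤ c) :
    ∫ x in s, x ∂μ ≤ c * μ.real s := by
  rw [mul_comm, ← smul_eq_mul, ← setIntegral_const]
  exact setIntegral_mono_on hμ.integrableOn (integrableOn_const (measure_ne_top μ _)) hs hc

lemma setIntegral_Ici_eq_barycenter_mul [IsFiniteMeasure μ] (w : ℝ) :
    ∫ x in Ici w, x ∂μ = barycenter μ w * μ.real (Ici w) := by
  rw [barycenter, ← measureReal_def]
  split_ifs with h
  · exact (div_mul_cancel₀ _ h.ne').symm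
  · have hzero : μ (Ici w) = 0 := by
      simpa [measureReal_def, ENNReal.toReal_eq_zero_iff] using
        le_antisymm (not_lt.1 h) measureReal_nonneg
    simp [Measure.restrict_eq_zero.2 hzero, measureReal_def, hzero]

lemma le_barycenter [IsFiniteMeasure μ] (hμ : Integrable (fun x : ℝ => x) μ) (w : ℝ) :
    w ≤ barycenter μ w := by
  rw [barycenter, ← measureReal_def]
  split_ifs with hpos
  · exact (le_div_iff₀ hpos).2 <| setIntegral_ge_of_const_le_real measurableSet_Ici
      (measure_ne_top μ _) (fun x hx => hx) hμ.integrableOn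
  · exact le_rfl

lemma barycenter_mono [IsFiniteMeasure μ] (hμ : Integrable (fun x : ℝ => x) μ) :
    Monotone (barycenter μ) := by
  intro w₁ w₂ h12
  set b := barycenter μ w₂
  have hw₂b : w₂ ≤ b := le_barycenter hμ w₂
  have hdisj : Disjoint (Ico w₁ w₂) (Ici w₂) :=
    Set.disjoint_left.2 fun x hx hx' => (not_le.2 hx.2) hx'
  have hunion : Ico w₁ w₂ ∪ Ici w₂ = Ici w₁ := Ico_union_Ici_eq_Ici h12
  refine barycenter_le_of_setIntegral_Ici_le (h12.trans hw₂b) ?_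
  calc ∫ x in Ici w₁, x ∂μ = ∫ x in Ico w₁ w₂, x ∂μ + ∫ x in Ici w₂, x ∂μ := by
        rw [← hunion, setIntegral_union hdisj measurableSet_Ici hμ.integrableOn hμ.integrableOn]
    _ ≤ b * μ.real (Ico w₁ w₂) + b * μ.real (Ici w₂) := by
        rw [setIntegral_Ici_eq_barycenter_mul w₂]
        gcongr
        exact setIntegral_id_le_mul hμ measurableSet_Ico fun x hx => hx.2.le.trans hw₂b
    _ = b * μ.real (Ici w₁) := by
        rw [← mul_add, ← measureReal_union hdisj measurableSet_Ici, hunion]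

lemma barycenter_nonneg [IsProbabilityMeasure μ] (hμ : Centred μ) (w : ℝ) :
    0 ≤ barycenter μ w :=
  calc (0 : ℝ) = ∫ x in Ici w, x ∂μ + ∫ x in Iio w, x ∂μ := by
        rw [← hμ.2, ← compl_Ici, integral_add_compl measurableSet_Ici hμ.1]
    _ ≤ barycenter μ w * μ.real (Ici w) + barycenter μ w * μ.real (Iio w) := by
        rw [setIntegral_Ici_eq_barycenter_mul]
        gcongr
        exact setIntegral_id_le_mul hμ.1 measurableSet_Iio fun x hx =>
          hx.le.trans (le_barycenter hμ.1 w)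
    _ = barycenter μ w := by
        rw [← mul_add, ← compl_Ici, measureReal_add_measureReal_compl measurableSet_Ici,
          probReal_univ, mul_one]

end Barycenter

section Potential

variable {F : ℝ × ℝ → ℝ} {β : ℝ → ℝ}

inductive IncrementChain (F : ℝ × ℝ → ℝ) (β : ℝ → ℝ) : ℝ → ℝ → ℝ → Prop
  | refl (a : ℝ) : IncrementChain F β a a 0
  | step {a b v : ℝ} (w c : ℝ) (h : IncrementChain F β a b v) (hw : β w ≤ b) (hbc : b ≤ c) :
      IncrementChain F β a c (v + (F (w, c) - F (w, b)))

lemma StrictlySupermodular.sub_le_sub_of_le_of_le (hsm : StrictlySupermodular F)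
    (hβ : Monotone β) {w w' b c : ℝ} (hw : β w ≤ b) (hbc : b ≤ c) (hw' : c ≤ β w') :
    F (w, c) - F (w, b) ≤ F (w', c) - F (w', b) := by
  rcases hbc.eq_or_lt with rfl | hbc
  · simp
  · have hww' : w < w' := hβ.reflect_lt (hw.trans_lt (hbc.trans_le hw'))
    linarith [hsm w w' b c hww' hbc]

lemma IncrementChain.le_sub (hsm : StrictlySupermodular F) (hβ : Monotone β) {a b v : ℝ}
    (h : IncrementChain F β a b v) {w' : ℝ} (hw' : b ≤ β w') : v ≤ F (w', b) - F (w', a) := by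
  induction h with
  | refl => simp
  | step w c h hw hbc ih =>
    linarith [ih (hbc.trans hw'), hsm.sub_le_sub_of_le_of_le hβ hw hbc hw']

lemma IncrementChain.split {a b v : ℝ} (h : IncrementChain F β a b v) {u : ℝ} (hau : a ≤ u)
    (hub : u ≤ b) :
    ∃ v₁ v₂, IncrementChain F β a u v₁ ∧ IncrementChain F β u b v₂ ∧ v = v₁ + v₂ := by
  induction h with
  | refl =>
    obtain rfl := le_antisymm hub hau
    exact ⟨0, 0, .refl _, .refl _, by ring⟩
  | @step b _ w c h hw hbc ih =>
    rcases le_or_gt u b with hu | hu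
    · obtain ⟨v₁, v₂, h₁, h₂, rfl⟩ := ih hu
      exact ⟨v₁, _, h₁, h₂.step w c hw hbc, by ring⟩
    · refine ⟨_, F (w, c) - F (w, u), h.step w u hw hu.le, ?_, by ring⟩
      simpa using (IncrementChain.refl (F := F) u).step w c (hw.trans hu.le) hub

def chainValues (F : ℝ × ℝ → ℝ) (β : ℝ → ℝ) (s : ℝ) : Set ℝ :=
  {v | ∃ a, 0 ≤ a ∧ IncrementChain F β a s v}

/-- Only `t ≥ 0` matters, the running maximum being nonnegative; `max t 0` makes the potential
constant on `(-∞, 0]`, so that it is a Stieltjes function on all of `ℝ`. -/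
def potential (F : ℝ × ℝ → ℝ) (β : ℝ → ℝ) (t : ℝ) : ℝ :=
  sSup (chainValues F β (max t 0))

lemma zero_mem_chainValues {s : ℝ} (hs : 0 ≤ s) : (0 : ℝ) ∈ chainValues F β s :=
  ⟨s, hs, .refl s⟩

lemma potential_max_zero (t : ℝ) : potential F β (max t 0) = potential F β t := by
  simp [potential]

lemma potential_le {s b : ℝ} (hs : 0 ≤ s) (h : ∀ v ∈ chainValues F β s, v ≤ b) :
    potential F β s ≤ b := by
  rw [potential, max_eq_left hs]
  exact csSup_le ⟨0, zero_mem_chainValues hs⟩ h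

variable (hsm : StrictlySupermodular F) (hmono : ∀ w, Monotone fun s => F (w, s))
  (hβ : Monotone β) (hβ_ge : ∀ w, w ≤ β w)
include hsm hmono hβ hβ_ge

lemma bddAbove_chainValues (s : ℝ) : BddAbove (chainValues F β s) := by
  refine ⟨F (s, s) - F (s, 0), ?_⟩
  rintro v ⟨a, ha, hchain⟩
  linarith [hchain.le_sub hsm hβ (hβ_ge s), hmono s ha]

lemma le_potential {s v : ℝ} (hs : 0 ≤ s) (hv : v ∈ chainValues F β s) : v ≤ potential F β s := by
  rw [potential, max_eq_left hs]
  exact le_csSup (bddAbove_chainValues hsm hmono hβ hβ_ge s) hv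

lemma potential_nonneg (t : ℝ) : 0 ≤ potential F β t :=
  le_csSup (bddAbove_chainValues hsm hmono hβ hβ_ge _) (zero_mem_chainValues (le_max_right t 0))

lemma potential_mono : Monotone (potential F β) := by
  have hnonneg : ∀ u t : ℝ, 0 ≤ u → u ≤ t → potential F β u ≤ potential F β t := by
    intro u t hu hut
    refine potential_le hu fun v ⟨a, ha, hchain⟩ => ?_
    cases hchain with
    | refl => exact potential_nonneg hsm hmono hβ hβ_ge t
    | step w c h hw hbc =>
      refine le_trans ?_ (le_potential hsm hmono hβ hβ_ge (hu.trans hut)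
        ⟨a, ha, h.step w t hw (hbc.trans hut)⟩)
      linarith [hmono w hut]
  intro u t hut
  rw [← potential_max_zero u, ← potential_max_zero t]
  exact hnonneg _ _ (le_max_right u 0) (max_le_max hut le_rfl)

lemma add_sub_le_potential {w u t : ℝ} (hwu : β w ≤ u) (hu : 0 ≤ u) (hut : u ≤ t) :
    potential F β u + (F (w, t) - F (w, u)) ≤ potential F β t := by
  rw [← le_sub_iff_add_le]
  refine potential_le hu fun v ⟨a, ha, hchain⟩ => ?_
  rw [le_sub_iff_add_le]
  exact le_potential hsm hmono hβ hβ_ge (hu.trans hut) ⟨a, ha, hchain.step w t hwu hut⟩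

lemma potential_le_add_sub {w u t : ℝ} (hu : 0 ≤ u) (hut : u ≤ t) (htw : t ≤ β w) :
    potential F β t ≤ potential F β u + (F (w, t) - F (w, u)) := by
  refine potential_le (hu.trans hut) fun v ⟨a, ha, hchain⟩ => ?_
  rcases le_or_gt a u with hau | hua
  · obtain ⟨v₁, v₂, h₁, h₂, rfl⟩ := hchain.split hau hut
    linarith [le_potential hsm hmono hβ hβ_ge hu ⟨a, ha, h₁⟩, h₂.le_sub hsm hβ htw]
  · linarith [hchain.le_sub hsm hβ htw, hmono w hua.le, potential_nonneg hsm hmono hβ hβ_ge u]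

lemma continuousWithinAt_potential (hcont : ∀ w, Continuous fun s => F (w, s)) (x : ℝ) :
    ContinuousWithinAt (potential F β) (Ici x) x := by
  set w := max x 0 + 1
  set g : ℝ → ℝ := fun t => potential F β x + (F (w, max t 0) - F (w, max x 0))
  have hg : Tendsto g (𝓝[Ici x] x) (𝓝 (potential F β x)) := by
    have : Continuous g :=
      continuous_const.add (((hcont w).comp (continuous_id.max continuous_const)).sub
        continuous_const)
    simpa [g] using (this.tendsto x).mono_left nhdsWithin_le_nhds
  have hle : ∀ t ∈ Icc x (x + 1), potential F β t ≤ g t := fun t ht => by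
    have hmax : max t 0 ≤ β w :=
      (max_le (by linarith [ht.2, le_max_left x 0]) (by positivity)).trans (hβ_ge w)
    simpa [g, potential_max_zero] using potential_le_add_sub hsm hmono hβ hβ_ge
      (le_max_right x 0) (max_le_max ht.1 le_rfl) hmax
  exact tendsto_of_tendsto_of_tendsto_of_le_of_le' tendsto_const_nhds hg
    (eventually_nhdsWithin_of_forall fun t ht => potential_mono hsm hmono hβ hβ_ge ht)
    (eventually_iff_exists_mem.2 ⟨Icc x (x + 1), Icc_mem_nhdsGE (by linarith), hle⟩)

def potentialStieltjes (hcont : ∀ w, Continuous fun s => F (w, s)) : StieltjesFunction ℝ where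
  toFun := potential F β
  mono' := potential_mono hsm hmono hβ hβ_ge
  right_continuous' := continuousWithinAt_potential hsm hmono hβ hβ_ge hcont

lemma sub_le_potential_sub {w s : ℝ} (hs : 0 ≤ s) (hβw : 0 ≤ β w) :
    F (w, s) - F (w, β w) ≤ potential F β s - potential F β (β w) := by
  rcases le_or_gt (β w) s with hws | hsw
  · linarith [add_sub_le_potential hsm hmono hβ hβ_ge le_rfl hβw hws]
  · linarith [potential_le_add_sub hsm hmono hβ hβ_ge hs hsw.le le_rfl]

end Potential

section Stieltjes

variable {Ω : Type*} [MeasurableSpace Ω] {π : Measure Ω}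

lemma lintegral_ofReal_stieltjes_sub [SFinite π] (Λ : StieltjesFunction ℝ) {X Y : Ω → ℝ}
    (hX : Measurable X) (hY : Measurable Y) :
    ∫⁻ ω, ENNReal.ofReal (Λ (Y ω) - Λ (X ω)) ∂π
      = ∫⁻ t, π {ω | X ω < t ∧ t ≤ Y ω} ∂Λ.measure := by
  set S := {q : Ω × ℝ | X q.1 < q.2 ∧ q.2 ≤ Y q.1}
  have hS : MeasurableSet S :=
    (measurableSet_lt (hX.comp measurable_fst) measurable_snd).inter
      (measurableSet_le measurable_snd (hY.comp measurable_fst))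
  calc ∫⁻ ω, ENNReal.ofReal (Λ (Y ω) - Λ (X ω)) ∂π
      = ∫⁻ ω, ∫⁻ t, S.indicator 1 (ω, t) ∂Λ.measure ∂π := by
        refine lintegral_congr fun ω => ?_
        rw [← Λ.measure_Ioc, ← lintegral_indicator_one measurableSet_Ioc]
        rfl
    _ = ∫⁻ t, ∫⁻ ω, S.indicator 1 (ω, t) ∂π ∂Λ.measure :=
        lintegral_lintegral_swap (measurable_one.indicator hS).aemeasurable
    _ = ∫⁻ t, π {ω | X ω < t ∧ t ≤ Y ω} ∂Λ.measure := by
        refine lintegral_congr fun t => ?_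
        exact lintegral_indicator_one (measurable_prodMk_right hS)

lemma measure_sdiff_le_measure_sdiff [IsFiniteMeasure π] {A B : Set Ω} (hA : MeasurableSet A)
    (hB : MeasurableSet B) (h : π A ≤ π B) : π (A \ B) ≤ π (B \ A) := by
  rw [← ENNReal.add_le_add_iff_right (measure_ne_top π (A ∩ B)), measure_sdiff_add_inter A hB,
    inter_comm, measure_sdiff_add_inter B hA]
  exact h

theorem integral_nonpos_of_le_stieltjes_sub [IsFiniteMeasure π] (Λ : StieltjesFunction ℝ)
    {X Y : Ω → ℝ} (hX : Measurable X) (hY : Measurable Y)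
    (hdom : ∀ t, π {ω | t ≤ Y ω} ≤ π {ω | t ≤ X ω}) {h : Ω → ℝ} (hh : Integrable h π)
    (hle : ∀ᵐ ω ∂π, h ω ≤ Λ (Y ω) - Λ (X ω)) : ∫ ω, h ω ∂π ≤ 0 := by
  have hcross : ∀ t, π {ω | X ω < t ∧ t ≤ Y ω} ≤ π {ω | Y ω < t ∧ t ≤ X ω} := fun t => by
    have hsd := measure_sdiff_le_measure_sdiff (measurableSet_le measurable_const hY)
      (measurableSet_le measurable_const hX) (hdom t)
    convert hsd using 2 <;> ext ω <;> simp [and_comm]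
  have hneg_fin : ∫⁻ ω, ENNReal.ofReal (-h ω) ∂π ≠ ⊤ :=
    ne_top_of_le_ne_top hh.neg.2.ne (lintegral_mono fun ω => Real.ofReal_le_enorm _)
  have hparts : ∫⁻ ω, ENNReal.ofReal (h ω) ∂π ≤ ∫⁻ ω, ENNReal.ofReal (-h ω) ∂π :=
    calc ∫⁻ ω, ENNReal.ofReal (h ω) ∂π ≤ ∫⁻ ω, ENNReal.ofReal (Λ (Y ω) - Λ (X ω)) ∂π :=
          lintegral_mono_ae (hle.mono fun ω hω => ENNReal.ofReal_le_ofReal hω)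
      _ = ∫⁻ t, π {ω | X ω < t ∧ t ≤ Y ω} ∂Λ.measure := lintegral_ofReal_stieltjes_sub Λ hX hY
      _ ≤ ∫⁻ t, π {ω | Y ω < t ∧ t ≤ X ω} ∂Λ.measure := lintegral_mono hcross
      _ = ∫⁻ ω, ENNReal.ofReal (Λ (X ω) - Λ (Y ω)) ∂π :=
          (lintegral_ofReal_stieltjes_sub Λ hY hX).symm
      _ ≤ ∫⁻ ω, ENNReal.ofReal (-h ω) ∂π :=
          lintegral_mono_ae (hle.mono fun ω hω => ENNReal.ofReal_le_ofReal (by linarith))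
  rw [integral_eq_lintegral_pos_part_sub_lintegral_neg_part hh, sub_nonpos]
  exact ENNReal.toReal_mono hneg_fin hparts

end Stieltjes

lemma le_measure_Ici_of_forall_lt {μ : Measure ℝ} [IsFiniteMeasure μ] {a : ENNReal} {c : ℝ}
    (h : ∀ c' < c, a ≤ μ (Ici c')) : a ≤ μ (Ici c) := by
  obtain ⟨u, hu_mono, hu_lt, hu_lim⟩ := exists_seq_strictMono_tendsto c
  have hinter : ⋂ n, Ici (u n) = Ici c := by
    ext x
    simp only [mem_iInter, mem_Ici]
    exact ⟨fun hx => le_of_tendsto' hu_lim hx, fun hx n => (hu_lt n).le.trans hx⟩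
  have hlim : Tendsto (fun n => μ (Ici (u n))) atTop (𝓝 (μ (Ici c))) := by
    rw [← hinter]
    exact tendsto_measure_iInter_atTop (fun _ => measurableSet_Ici.nullMeasurableSet)
      (fun _ _ hmn => Ici_subset_Ici.2 (hu_mono.monotone hmn)) ⟨0, measure_ne_top μ _⟩
  exact ge_of_tendsto' hlim fun n => h _ (hu_lt n)

namespace RogersAdmissible

variable {μ : Measure ℝ} {π : Measure (ℝ × ℝ)}

lemma measure_fst_preimage (hπ : RogersAdmissible μ π) {B : Set ℝ} (hB : MeasurableSet B) :
    π (Prod.fst ⁻¹' B) = μ B := by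
  rw [← hπ.2.2.2.2, Measure.map_apply measurable_fst hB]

lemma integral_comp_fst (hπ : RogersAdmissible μ π) {f : ℝ → ℝ}
    (hf : AEStronglyMeasurable f μ) : ∫ p, f p.1 ∂π = ∫ w, f w ∂μ := by
  rw [← hπ.2.2.2.2] at hf ⊢
  exact (integral_map measurable_fst.aemeasurable hf).symm

lemma integrable_comp_fst (hπ : RogersAdmissible μ π) {f : ℝ → ℝ} (hf : Integrable f μ) :
    Integrable (fun p : ℝ × ℝ => f p.1) π := by
  rw [← hπ.2.2.2.2] at hf
  exact hf.comp_measurable measurable_fst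

lemma measure_snd_ge_le_measure_Ici [IsFiniteMeasure μ] [IsFiniteMeasure π]
    (hπ : RogersAdmissible μ π) (hμ : Integrable (fun x : ℝ => x) μ) {c t : ℝ} (ht : 0 ≤ t)
    (hct : barycenter μ c < t) : π {p | t ≤ p.2} ≤ μ (Ici c) := by
  set A := {p : ℝ × ℝ | t ≤ p.2}
  have hA : MeasurableSet A := measurableSet_le measurable_const measurable_snd
  have hc : c < t := (le_barycenter hμ c).trans_lt hct
  have hrogers := hπ.2.2.2.1 t ht
  rw [← measureReal_def] at hrogers
  have hsub : Integrable (fun p : ℝ × ℝ => p.1 - c) π := hπ.1.sub (integrable_const c)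
  have hpos : ∫ p, max (p.1 - c) 0 ∂π = (barycenter μ c - c) * μ.real (Ici c) := by
    rw [hπ.integral_comp_fst (f := fun x => max (x - c) 0) (by fun_prop)]
    have hind : (fun x => max (x - c) 0) = (Ici c).indicator (fun x => x - c) := by
      ext x
      by_cases hx : c ≤ x <;> simp [indicator, hx, le_of_lt, not_le.1]
    rw [hind, integral_indicator measurableSet_Ici,
      integral_sub hμ.integrableOn (integrableOn_const (measure_ne_top μ _)),
      setIntegral_const, setIntegral_Ici_eq_barycenter_mul, smul_eq_mul]
    ring
  have hkey : (t - c) * π.real A ≤ (barycenter μ c - c) * μ.real (Ici c) :=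
    calc (t - c) * π.real A ≤ ∫ p in A, p.1 ∂π - c * π.real A := by linarith
      _ = ∫ p in A, (p.1 - c) ∂π := by
        rw [integral_sub hπ.1.integrableOn (integrableOn_const (measure_ne_top π _)),
          setIntegral_const, smul_eq_mul, mul_comm]
      _ ≤ ∫ p in A, max (p.1 - c) 0 ∂π :=
        setIntegral_mono hsub.integrableOn hsub.pos_part.integrableOn fun _ => le_max_left _ _
      _ ≤ ∫ p, max (p.1 - c) 0 ∂π :=
        setIntegral_le_integral hsub.pos_part (Eventually.of_forall fun _ => le_max_right _ _)
      _ = _ := hpos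
  have hreal : π.real A ≤ μ.real (Ici c) := le_of_mul_le_mul_left
    (hkey.trans (mul_le_mul_of_nonneg_right (by linarith) measureReal_nonneg)) (by linarith)
  exact (ENNReal.toReal_le_toReal (measure_ne_top _ _) (measure_ne_top _ _)).1 hreal

lemma measure_snd_ge_le_measure_barycenter_ge [IsFiniteMeasure μ] [NullSingletonClass μ]
    [IsFiniteMeasure π]
    (hπ : RogersAdmissible μ π) (hμ : Integrable (fun x : ℝ => x) μ) {t : ℝ} (ht : 0 ≤ t) :
    π {p | t ≤ p.2} ≤ μ {w | t ≤ barycenter μ w} := by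
  set B := {w | t ≤ barycenter μ w}
  have hup : ∀ ⦃a w⦄, a ∈ B → a ≤ w → w ∈ B := fun a w ha haw =>
    ha.trans (barycenter_mono hμ haw)
  by_cases hbdd : BddBelow B
  · have hIoi : Ioi (sInf B) ⊆ B := fun x hx => by
      obtain ⟨a, ha, hax⟩ := exists_lt_of_csInf_lt ⟨t, le_barycenter hμ t⟩ hx
      exact hup ha hax.le
    calc π {p | t ≤ p.2} ≤ μ (Ici (sInf B)) := le_measure_Ici_of_forall_lt fun c hc =>
          hπ.measure_snd_ge_le_measure_Ici hμ ht
            (not_le.1 fun hcB => (csInf_le hbdd hcB).not_gt hc)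
      _ = μ (Ioi (sInf B)) := (measure_congr Ioi_ae_eq_Ici).symm
      _ ≤ μ B := measure_mono hIoi
  · have hB : B = univ := eq_univ_of_forall fun w => by
      obtain ⟨a, ha, haw⟩ := not_bddBelow_iff.1 hbdd w
      exact hup ha haw.le
    calc π {p | t ≤ p.2} ≤ π (Prod.fst ⁻¹' univ) := measure_mono (subset_univ _)
      _ = μ B := by rw [hB, hπ.measure_fst_preimage MeasurableSet.univ]

lemma measure_snd_ge_le_measure_barycenter_fst_ge [IsProbabilityMeasure μ] [NullSingletonClass μ]
    [IsFiniteMeasure π] (hπ : RogersAdmissible μ π) (hμ : Centred μ) (t : ℝ) :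
    π {p | t ≤ p.2} ≤ π {p | t ≤ barycenter μ p.1} := by
  rcases le_or_gt 0 t with ht | ht
  · have hB : MeasurableSet {w | t ≤ barycenter μ w} :=
      measurableSet_le measurable_const (barycenter_mono hμ.1).measurable
    exact (hπ.measure_snd_ge_le_measure_barycenter_ge hμ.1 ht).trans_eq
      (hπ.measure_fst_preimage hB).symm
  · have hB : {p : ℝ × ℝ | t ≤ barycenter μ p.1} = univ :=
      eq_univ_of_forall fun p => ht.le.trans (barycenter_nonneg hμ p.1)
    exact hB ▸ measure_mono (subset_univ _)

end RogersAdmissible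

/-- the Azéma–Yor joint law is optimal for continuous strictly
supermodular functions increasing in the running maximum. -/
theorem azemaYor_optimal (μ : Measure ℝ) [IsProbabilityMeasure μ] [NullSingletonClass μ]
    (hμ : Centred μ)
    (F : ℝ × ℝ → ℝ) (hFc : Continuous F) (hFsm : StrictlySupermodular F)
    (hinc : ∀ w : ℝ, StrictMono (fun s : ℝ => F (w, s)))
    (hint : Integrable (fun w : ℝ => F (w, barycenter μ w)) μ)
    (π : Measure (ℝ × ℝ)) [IsProbabilityMeasure π]
    (hπ : RogersAdmissible μ π) (hFπ : Integrable F π) :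
    (∫ p, F p ∂π) ≤ ∫ w, F (w, barycenter μ w) ∂μ := by
  set β := barycenter μ
  have hβ : Monotone β := barycenter_mono hμ.1
  let Λ := potentialStieltjes hFsm (fun w => (hinc w).monotone) hβ (le_barycenter hμ.1)
    (fun w => hFc.comp (continuous_const.prodMk continuous_id))
  have hintπ : Integrable (fun p : ℝ × ℝ => F (p.1, β p.1)) π := hπ.integrable_comp_fst hint
  have hgap : ∀ᵐ p ∂π, F p - F (p.1, β p.1) ≤ Λ p.2 - Λ (β p.1) := by
    filter_upwards [mem_ae_iff.2 hπ.2.2.1] with p hp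
    exact sub_le_potential_sub hFsm (fun w => (hinc w).monotone) hβ (le_barycenter hμ.1) hp.1
      (barycenter_nonneg hμ p.1)
  have hneg : ∫ p, (F p - F (p.1, β p.1)) ∂π ≤ 0 :=
    integral_nonpos_of_le_stieltjes_sub Λ (hβ.measurable.comp measurable_fst) measurable_snd
      (hπ.measure_snd_ge_le_measure_barycenter_fst_ge hμ) (hFπ.sub hintπ) hgap
  rw [integral_sub hFπ hintπ, hπ.integral_comp_fst hint.aestronglyMeasurable] at hneg
  linarith
end
end

section
/- Let F : ℝ × ℝ → ℝ have a continuous partial derivative F_s(w,s) = ∂F/∂s(w,s), and suppose that for each s₀ > 0 the function w ↦ F_s(w, s₀)/(s₀ − w) is strictly increasing on (−∞, s₀). Let w₁ < w₂ and 0 < s₂ < s₁ with w₂ < s₂. Then ∫_{s₂}^{s₁} F_s(w₂, ξ) · ((ξ − w₁)(s₂ − w₂)) / ((ξ − w₂)(s₂ − w₁)) dξ > ∫_{s₂}^{s₁} F_s(w₁, ξ) · (s₂ − w₂)/(s₂ − w₁) dξ; i.e. the gain Δ from the mass reassignment in the Hobson–Klimmek improvement step is strictly positive. -/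
open MeasureTheory Set

noncomputable section

/-! For each `ξ ∈ [s₂, s₁]` the ratio condition at level `ξ`, applied to `w₁ < w₂ < ξ`, gives
`Fs(w₁, ξ)(ξ - w₂) < Fs(w₂, ξ)(ξ - w₁)`; multiplying by the positive factor
`(s₂ - w₂) / ((ξ - w₂)(s₂ - w₁))` makes this a strict inequality between the two integrands,
and continuity of the integrands on `[s₂, s₁]` makes it strict for the integrals. -/

theorem mul_sub_lt_mul_sub_of_strictMonoOn_div {f : ℝ → ℝ} {ξ w₁ w₂ : ℝ}
    (hf : StrictMonoOn (fun w => f w / (ξ - w)) (Iio ξ)) (hw : w₁ < w₂) (hw₂ : w₂ < ξ) :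
    f w₁ * (ξ - w₂) < f w₂ * (ξ - w₁) := by
  have h := hf (hw.trans hw₂) hw₂ hw
  rwa [div_lt_div_iff₀ (by linarith) (by linarith)] at h

theorem mul_div_lt_mul_div_of_mul_sub_lt {a b ξ w₁ w₂ u v : ℝ}
    (h : a * (ξ - w₂) < b * (ξ - w₁)) (hw₂ : w₂ < ξ) (hu : 0 < u) (hv : 0 < v) :
    a * (u / v) < b * ((ξ - w₁) * u / ((ξ - w₂) * v)) := by
  have hξ : 0 < ξ - w₂ := sub_pos.mpr hw₂
  have ha : a < b * (ξ - w₁) / (ξ - w₂) := (lt_div_iff₀ hξ).mpr h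
  calc a * (u / v) < b * (ξ - w₁) / (ξ - w₂) * (u / v) := by gcongr
    _ = b * ((ξ - w₁) * u / ((ξ - w₂) * v)) := by field_simp

theorem intervalIntegral_lt_of_continuousOn_of_lt {f g : ℝ → ℝ} {a b : ℝ} (hab : a < b)
    (hf : ContinuousOn f (Icc a b)) (hg : ContinuousOn g (Icc a b))
    (hlt : ∀ x ∈ Icc a b, f x < g x) :
    (∫ x in a..b, f x) < ∫ x in a..b, g x :=
  intervalIntegral.integral_lt_integral_of_continuousOn_of_le_of_exists_lt hab hf hg
    (fun x hx => (hlt x (Ioc_subset_Icc_self hx)).le)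
    ⟨a, left_mem_Icc.mpr hab.le, hlt a (left_mem_Icc.mpr hab.le)⟩

theorem hobson_klimmek_gain_pos_general (Fs : ℝ × ℝ → ℝ)
    (hFs_cont : Continuous Fs)
    (hratio : ∀ s₀ : ℝ, 0 < s₀ →
      StrictMonoOn (fun w : ℝ => Fs (w, s₀) / (s₀ - w)) (Iio s₀))
    (w₁ w₂ s₁ s₂ : ℝ) (hw : w₁ < w₂) (hs₂ : 0 < s₂) (hs : s₂ < s₁) (hws : w₂ < s₂) :
    (∫ ξ in s₂..s₁, Fs (w₁, ξ) * ((s₂ - w₂) / (s₂ - w₁))) <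
      ∫ ξ in s₂..s₁, Fs (w₂, ξ) * (((ξ - w₁) * (s₂ - w₂)) / ((ξ - w₂) * (s₂ - w₁))) := by
  have hu : 0 < s₂ - w₂ := sub_pos.mpr hws
  have hv : 0 < s₂ - w₁ := sub_pos.mpr (hw.trans hws)
  have hw₂ : ∀ ξ ∈ Icc s₂ s₁, w₂ < ξ := fun ξ hξ => hws.trans_le hξ.1
  have hcross : ∀ ξ ∈ Icc s₂ s₁, Fs (w₁, ξ) * (ξ - w₂) < Fs (w₂, ξ) * (ξ - w₁) :=
    fun ξ hξ => mul_sub_lt_mul_sub_of_strictMonoOn_div (hratio ξ (hs₂.trans_le hξ.1)) hw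
      (hw₂ ξ hξ)
  refine intervalIntegral_lt_of_continuousOn_of_lt hs (by fun_prop) ?_ fun ξ hξ =>
    mul_div_lt_mul_div_of_mul_sub_lt (hcross ξ hξ) (hw₂ ξ hξ) hu hv
  refine ContinuousOn.mul (by fun_prop) (ContinuousOn.div (by fun_prop) (by fun_prop) ?_)
  exact fun ξ hξ => (mul_pos (sub_pos.mpr (hw₂ ξ hξ)) hv).ne'

/-- strict positivity of the gain in the Hobson–Klimmek improvement step. -/
theorem hobson_klimmek_gain_pos (F Fs : ℝ × ℝ → ℝ)
    (hderiv : ∀ w s : ℝ, HasDerivAt (fun t : ℝ => F (w, t)) (Fs (w, s)) s)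
    (hFs_cont : Continuous Fs)
    (hratio : ∀ s₀ : ℝ, 0 < s₀ →
      StrictMonoOn (fun w : ℝ => Fs (w, s₀) / (s₀ - w)) (Iio s₀))
    (w₁ w₂ s₁ s₂ : ℝ) (hw : w₁ < w₂) (hs₂ : 0 < s₂) (hs : s₂ < s₁) (hws : w₂ < s₂) :
    (∫ ξ in s₂..s₁, Fs (w₁, ξ) * ((s₂ - w₂) / (s₂ - w₁))) <
      ∫ ξ in s₂..s₁, Fs (w₂, ξ) * (((ξ - w₁) * (s₂ - w₂)) / ((ξ - w₂) * (s₂ - w₁))) :=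
  hobson_klimmek_gain_pos_general Fs hFs_cont hratio w₁ w₂ s₁ s₂ hw hs₂ hs hws
end
end
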